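/- Let G be a group, P ≤ G a subgroup equal to its own normalizer, Γ ≤ G a subgroup, and g ∈ G. Then the map sending a double coset Γ_P y Γ_P ⊆ ΓgΓ ∩ P (where Γ_P = Γ ∩ P and y = γ₂gγ₁ with γ₁,γ₂ ∈ Γ) to the Γ[g]-conjugacy class of Q = γ₁Pγ₁⁻¹ (where Γ[g] = Γ ∩ g⁻¹Γg) is well defined: the conjugacy class of Q does not depend on the choice of representative y in the double coset nor on the choice of γ₁, γ₂. -/

import Mathlib

/-- Conjugated subgroup `g H g⁻¹`. -/
def conjSub {G : Type*} [Group G] (g : G) (H : Subgroup G) : Subgroup G :=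
  H.map (MulAut.conj g).toMonoidHom

/-- `Γ[g] = Γ ∩ g⁻¹ Γ g`. -/
def heckeSubgroup {G : Type*} [Group G] (Γ : Subgroup G) (g : G) : Subgroup G :=
  Γ ⊓ Γ.map (MulAut.conj g⁻¹).toMonoidHom

lemma mem_conjSub {G : Type*} [Group G] {g z : G} {H : Subgroup G} :
    z ∈ conjSub g H ↔ ∃ x ∈ H, g * x * g⁻¹ = z := by
  simp [conjSub, Subgroup.mem_map]

lemma conjSub_conjSub {G : Type*} [Group G] (x y : G) (H : Subgroup G) :
    conjSub x (conjSub y H) = conjSub (x * y) H := by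
  ext z
  simp only [mem_conjSub]
  constructor
  · rintro ⟨w, ⟨p, hp, rfl⟩, rfl⟩
    exact ⟨p, hp, by group⟩
  · rintro ⟨p, hp, rfl⟩
    exact ⟨y * p * y⁻¹, ⟨p, hp, rfl⟩, by group⟩

lemma conjSub_self {G : Type*} [Group G] {p : G} {P : Subgroup G} (hp : p ∈ P) :
    conjSub p P = P := by
  ext z
  simp only [mem_conjSub]
  constructor
  · rintro ⟨x, hx, rfl⟩
    exact mul_mem (mul_mem hp hx) (inv_mem hp)
  · intro hz
    exact ⟨p⁻¹ * z * p, by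
      exact mul_mem (mul_mem (inv_mem hp) hz) hp, by group⟩

/-- Well-definedness of the map `Ξ`: if `y = γ₂ g γ₁` and `y' = γ₂' g γ₁'` lie in
`P` and in the same `Γ_P`-double coset, then `γ₁ P γ₁⁻¹` and `γ₁' P γ₁'⁻¹` are
`Γ[g]`-conjugate. -/
theorem stmt1 {G : Type*} [Group G] (P Γ : Subgroup G) (hP : Subgroup.normalizer (P : Set G) = P)
    (g γ₁ γ₂ γ₁' γ₂' : G)
    (h1 : γ₁ ∈ Γ) (h2 : γ₂ ∈ Γ) (h1' : γ₁' ∈ Γ) (h2' : γ₂' ∈ Γ)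
    (y y' : G) (hy : y = γ₂ * g * γ₁) (hy' : y' = γ₂' * g * γ₁')
    (hyP : y ∈ P) (hy'P : y' ∈ P)
    (hsame : ∃ a ∈ Γ ⊓ P, ∃ b ∈ Γ ⊓ P, y' = a * y * b) :
    ∃ h ∈ heckeSubgroup Γ g, conjSub γ₁' P = conjSub h⁻¹ (conjSub γ₁ P) := by
  obtain ⟨a, ha, b, hb, hab⟩ := hsame
  have key : γ₂' * g * γ₁' = a * (γ₂ * g * γ₁) * b := by
    rw [← hy, ← hy']; exact hab
  have hγ₁' : γ₁' = (γ₂' * g)⁻¹ * (a * (γ₂ * g * γ₁) * b) := by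
    rw [← key]; group
  refine ⟨γ₁ * b * γ₁'⁻¹, Subgroup.mem_inf.mpr ⟨?_, ?_⟩, ?_⟩
  · exact mul_mem (mul_mem h1 hb.1) (inv_mem h1')
  · refine Subgroup.mem_map.mpr ⟨γ₂⁻¹ * a⁻¹ * γ₂',
      mul_mem (mul_mem (inv_mem h2) (inv_mem ha.1)) h2', ?_⟩
    show g⁻¹ * (γ₂⁻¹ * a⁻¹ * γ₂') * g⁻¹⁻¹ = γ₁ * b * γ₁'⁻¹
    rw [hγ₁']; group
  · have h1eq : (γ₁ * b * γ₁'⁻¹)⁻¹ * γ₁ = γ₁' * b⁻¹ := by group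
    rw [conjSub_conjSub, h1eq, ← conjSub_conjSub, conjSub_self (inv_mem hb.2)]
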